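/- Let Δ be a complete fan and suppose σ_1, σ_2 are cones generated by subsets of the rays of Δ such that there is a Demazure root m with m|_{σ_2} ≤ 0 and σ_1 = σ_2 ∩ m^⊥ a facet of σ_2. Then σ_1 belongs to Δ if and only if σ_2 belongs to Δ. -/
import Mathlib


/-- The natural pairing between the lattice `M = Fin d → ℤ` and its dual `N = Fin d → ℤ`. -/
def pairing {d : ℕ} (m v : Fin d → ℤ) : ℤ := ∑ i, m i * v i

/-- The rays as vectors of `N ⊗ ℚ = Fin d → ℚ`. -/
def vQ {d r : ℕ} (v : Fin r → Fin d → ℤ) (i : Fin r) : Fin d → ℚ := fun j => (v i j : ℚ)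

/-- The convex cone in `N ⊗ ℚ` generated by the rays `v i`, `i ∈ S`. -/
def coneOf {d r : ℕ} (v : Fin r → Fin d → ℤ) (S : Set (Fin r)) :
    PointedCone ℚ (Fin d → ℚ) :=
  Submodule.span {c : ℚ // 0 ≤ c} (vQ v '' S)

/-- `F` is a face of the cone `σ`: it is cut out of `σ` by a linear functional which is
nonnegative on `σ`. -/
def IsFaceOf {d : ℕ} (F σ : PointedCone ℚ (Fin d → ℚ)) : Prop :=
  F ≤ σ ∧ ∃ l : (Fin d → ℚ) →ₗ[ℚ] ℚ,
    (∀ x ∈ σ, 0 ≤ l x) ∧ ∀ x ∈ σ, (x ∈ F ↔ l x = 0)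

/-- The linear functional on `N ⊗ ℚ` defined by `m ∈ M`. -/
def mQ {d : ℕ} (m : Fin d → ℤ) : (Fin d → ℚ) →ₗ[ℚ] ℚ :=
  ∑ i, (m i : ℚ) • LinearMap.proj i

lemma mQ_apply {d : ℕ} (m : Fin d → ℤ) (x : Fin d → ℚ) :
    mQ m x = ∑ i, (m i : ℚ) * x i := by simp [mQ]

lemma mQ_vQ {d r : ℕ} (m : Fin d → ℤ) (v : Fin r → Fin d → ℤ) (j : Fin r) :
    mQ m (vQ v j) = (pairing m (v j) : ℚ) := by simp [mQ_apply, vQ, pairing]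

lemma mem_coneOf {d r : ℕ} (v : Fin r → Fin d → ℤ) {T : Set (Fin r)} {j : Fin r}
    (hj : j ∈ T) : vQ v j ∈ coneOf v T :=
  Submodule.subset_span ⟨j, hj, rfl⟩

lemma smul_apply' {d : ℕ} (l : (Fin d → ℚ) →ₗ[ℚ] ℚ) (a : {c : ℚ // 0 ≤ c})
    (x : Fin d → ℚ) : l (a • x) = a.1 * l x := by
  rw [← Nonneg.coe_smul, map_smul, smul_eq_mul]

lemma cone_nonneg {d r : ℕ} (v : Fin r → Fin d → ℤ) (T : Set (Fin r))
    (l : (Fin d → ℚ) →ₗ[ℚ] ℚ) (h : ∀ j ∈ T, 0 ≤ l (vQ v j)) :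
    ∀ x ∈ coneOf v T, 0 ≤ l x := by
  intro x hx
  induction hx using Submodule.span_induction with
  | mem x hx => obtain ⟨j, hj, rfl⟩ := hx; exact h j hj
  | zero => simp
  | add x y _ _ hx hy => rw [map_add]; linarith
  | smul a x _ hx => rw [smul_apply' l a x]; exact mul_nonneg a.2 hx

lemma cone_zero {d r : ℕ} (v : Fin r → Fin d → ℤ) (T : Set (Fin r))
    (l : (Fin d → ℚ) →ₗ[ℚ] ℚ) (h : ∀ j ∈ T, l (vQ v j) = 0) :
    ∀ x ∈ coneOf v T, l x = 0 := by
  intro x hx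
  induction hx using Submodule.span_induction with
  | mem x hx => obtain ⟨j, hj, rfl⟩ := hx; exact h j hj
  | zero => simp
  | add x y _ _ hx hy => rw [map_add, hx, hy, add_zero]
  | smul a x _ hx => rw [smul_apply' l a x, hx, mul_zero]

lemma neg_mem {d r : ℕ} (v : Fin r → Fin d → ℤ) (m : Fin d → ℤ) (k : Fin r)
    (hro : ∀ j, j ≠ k → 0 ≤ pairing m (v j)) (T : Set (Fin r)) :
    ∀ y ∈ coneOf v T, mQ m y < 0 → vQ v k ∈ coneOf v T := by
  intro y hy
  induction hy using Submodule.span_induction with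
  | mem x hx =>
    intro hneg
    obtain ⟨j, hj, rfl⟩ := hx
    rw [mQ_vQ] at hneg
    have hjk : j = k := by
      by_contra h
      exact absurd hneg (not_lt.2 (by exact_mod_cast hro j h))
    exact hjk ▸ mem_coneOf v hj
  | zero => intro h; simp at h
  | add x y hx hy ihx ihy =>
    intro h
    rw [map_add] at h
    rcases lt_or_ge (mQ m x) 0 with h' | h'
    · exact ihx h'
    · exact ihy (by linarith)
  | smul a x hx ihx =>
    intro h
    rw [smul_apply' (mQ m) a x] at h
    exact ihx (by nlinarith [a.2])

lemma dec {d r : ℕ} (v : Fin r → Fin d → ℤ) (m : Fin d → ℤ) (k : Fin r)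
    (hro : ∀ j, j ≠ k → 0 ≤ pairing m (v j)) (T : Set (Fin r)) :
    ∀ y ∈ coneOf v T, ∃ p, p ∈ coneOf v T ∧ 0 ≤ mQ m p ∧
      ∃ a : ℚ, 0 ≤ a ∧ y = p + a • vQ v k := by
  intro y hy
  induction hy using Submodule.span_induction with
  | mem x hx =>
    obtain ⟨j, hj, rfl⟩ := hx
    by_cases hjk : j = k
    · exact ⟨0, Submodule.zero_mem _, by simp, 1, zero_le_one, by simp [hjk]⟩
    · refine ⟨vQ v j, mem_coneOf v hj, ?_, 0, le_refl 0, by simp⟩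
      rw [mQ_vQ]; exact_mod_cast hro j hjk
  | zero => exact ⟨0, Submodule.zero_mem _, by simp, 0, le_refl 0, by simp⟩
  | add x y hx hy ihx ihy =>
    obtain ⟨p, hp, hmp, a, ha, rfl⟩ := ihx
    obtain ⟨q, hq, hmq, b, hb, rfl⟩ := ihy
    refine ⟨p + q, Submodule.add_mem _ hp hq, by rw [map_add]; linarith,
      a + b, by linarith, by rw [add_smul]; abel⟩
  | smul c x hx ihx =>
    obtain ⟨p, hp, hmp, a, ha, rfl⟩ := ihx
    refine ⟨c • p, Submodule.smul_mem _ _ hp, ?_, c.1 * a, mul_nonneg c.2 ha, ?_⟩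
    · rw [smul_apply' (mQ m) c p]; exact mul_nonneg c.2 hmp
    · rw [← Nonneg.coe_smul, ← Nonneg.coe_smul, smul_add, smul_smul]

lemma split {d r : ℕ} (v : Fin r → Fin d → ℤ) (T : Set (Fin r))
    (l' : (Fin d → ℚ) →ₗ[ℚ] ℚ) (C : PointedCone ℚ (Fin d → ℚ))
    (hg : ∀ j ∈ T, l' (vQ v j) = 0 → vQ v j ∈ C)
    (hg' : ∀ j ∈ T, 0 ≤ l' (vQ v j)) :
    ∀ x ∈ coneOf v T, l' x = 0 → x ∈ C := by
  have key : ∀ x ∈ coneOf v T, ∃ y z, x = y + z ∧ y ∈ C ∧ l' y = 0 ∧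
      (z = 0 ∨ 0 < l' z) := by
    intro x hx
    induction hx using Submodule.span_induction with
    | mem x hx =>
      obtain ⟨j, hj, rfl⟩ := hx
      by_cases h0 : l' (vQ v j) = 0
      · exact ⟨vQ v j, 0, by simp, hg j hj h0, h0, Or.inl rfl⟩
      · exact ⟨0, vQ v j, by simp, Submodule.zero_mem _, by simp,
          Or.inr (lt_of_le_of_ne (hg' j hj) (Ne.symm h0))⟩
    | zero => exact ⟨0, 0, by simp, Submodule.zero_mem _, by simp, Or.inl rfl⟩
    | add x y hx hy ihx ihy =>
      obtain ⟨y1, z1, rfl, hy1, hl1, hz1⟩ := ihx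
      obtain ⟨y2, z2, rfl, hy2, hl2, hz2⟩ := ihy
      refine ⟨y1 + y2, z1 + z2, by abel, Submodule.add_mem _ hy1 hy2,
        by rw [map_add, hl1, hl2, add_zero], ?_⟩
      rcases hz1 with rfl | h1
      · rcases hz2 with rfl | h2
        · exact Or.inl (by simp)
        · exact Or.inr (by simpa using h2)
      · rcases hz2 with rfl | h2
        · exact Or.inr (by simpa using h1)
        · exact Or.inr (by rw [map_add]; linarith)
    | smul c x hx ihx =>
      obtain ⟨y1, z1, rfl, hy1, hl1, hz1⟩ := ihx
      refine ⟨c • y1, c • z1, by rw [smul_add], Submodule.smul_mem _ _ hy1,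
        by rw [smul_apply' l' c y1, hl1, mul_zero], ?_⟩
      rcases hz1 with rfl | h1
      · exact Or.inl (by simp)
      · rcases eq_or_lt_of_le c.2 with hc | hc
        · refine Or.inl ?_
          rw [← Nonneg.coe_smul, ← hc, zero_smul]
        · exact Or.inr (by rw [smul_apply' l' c z1]; exact mul_pos hc h1)
  intro x hx hl
  obtain ⟨y, z, rfl, hy, hly, hz⟩ := key x hx
  rcases hz with rfl | h
  · simpa using hy
  · rw [map_add, hly, zero_add] at hl
    exact absurd hl (ne_of_gt h)

/-- let `Δ` be a complete fan with rays `v 1, …, v r`, and let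
`σ₁ = coneOf S₁`, `σ₂ = coneOf S₂` be cones generated by subsets of the rays such that
for some Demazure root `m` we have `m ≤ 0` on `σ₂` and `σ₁ = σ₂ ∩ m^⊥` is a facet of
`σ₂`.  Then `σ₁ ∈ Δ` if and only if `σ₂ ∈ Δ`. -/
theorem stmt17 {d r : ℕ} (v : Fin r → Fin d → ℤ)
    (Δ : Set (PointedCone ℚ (Fin d → ℚ)))
    (hfaces : ∀ σ ∈ Δ, ∀ F, IsFaceOf F σ → F ∈ Δ)
    (hinter : ∀ σ ∈ Δ, ∀ τ ∈ Δ, IsFaceOf (σ ⊓ τ) σ)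
    (hcomplete : ∀ x : Fin d → ℚ, ∃ σ ∈ Δ, x ∈ σ)
    (hgen : ∀ σ ∈ Δ, ∃ S : Set (Fin r), σ = coneOf v S)
    (hrays : ∀ i : Fin r, coneOf v {i} ∈ Δ)
    (S₁ S₂ : Set (Fin r)) (m : Fin d → ℤ)
    (hroot : ∃ k, pairing m (v k) = -1 ∧ ∀ j, j ≠ k → 0 ≤ pairing m (v j))
    (hneg : ∀ x ∈ coneOf v S₂, mQ m x ≤ 0)
    (hperp : ∀ x : Fin d → ℚ, x ∈ coneOf v S₁ ↔ x ∈ coneOf v S₂ ∧ mQ m x = 0)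
    (hfacet : IsFaceOf (coneOf v S₁) (coneOf v S₂)) :
    coneOf v S₁ ∈ Δ ↔ coneOf v S₂ ∈ Δ := by
  classical
  constructor
  · intro h1
    obtain ⟨k, hk1, hk2⟩ := hroot
    by_cases hcase : ∀ x ∈ coneOf v S₂, x ∈ coneOf v S₁
    · have heq : coneOf v S₂ = coneOf v S₁ :=
        le_antisymm (fun x hx => hcase x hx) hfacet.1
      rw [heq]; exact h1
    · push_neg at hcase
      obtain ⟨w, hw2, hw1⟩ := hcase
      have hwneg : mQ m w < 0 := by
        rcases lt_or_eq_of_le (hneg w hw2) with h | h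
        · exact h
        · exact absurd ((hperp w).2 ⟨hw2, h⟩) hw1
      have hk2' : vQ v k ∈ coneOf v S₂ := neg_mem v m k hk2 S₂ w hw2 hwneg
      have claimA : ∀ x ∈ coneOf v S₂, ∃ s ∈ coneOf v S₁,
          ∃ a : ℚ, 0 ≤ a ∧ x = s + a • vQ v k := by
        intro x hx
        obtain ⟨p, hp, hmp, a, ha, rfl⟩ := dec v m k hk2 S₂ x hx
        exact ⟨p, (hperp p).2 ⟨hp, le_antisymm (hneg p hp) hmp⟩, a, ha, rfl⟩
      set x₀ : Fin d → ℚ := ∑ j ∈ Finset.univ.filter (· ∈ S₁), vQ v j with hx₀def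
      have hx₀1 : x₀ ∈ coneOf v S₁ :=
        Submodule.sum_mem _ (fun j hj => mem_coneOf v (Finset.mem_filter.1 hj).2)
      have hmx₀ : mQ m x₀ = 0 := ((hperp x₀).1 hx₀1).2
      have hrelint : ∀ l : (Fin d → ℚ) →ₗ[ℚ] ℚ, (∀ y ∈ coneOf v S₁, 0 ≤ l y) →
          l x₀ = 0 → ∀ y ∈ coneOf v S₁, l y = 0 := by
        intro l hl hl0
        refine cone_zero v S₁ l ?_
        have hterm : ∀ j ∈ Finset.univ.filter (· ∈ S₁), l (vQ v j) = 0 := by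
          refine (Finset.sum_eq_zero_iff_of_nonneg ?_).1 ?_
          · intro j hj; exact hl _ (mem_coneOf v (Finset.mem_filter.1 hj).2)
          · rw [← map_sum, ← hx₀def, hl0]
        intro j hj
        exact hterm j (Finset.mem_filter.2 ⟨Finset.mem_univ j, hj⟩)
      obtain ⟨σ, hσΔ, hx₁σ⟩ := hcomplete (x₀ + vQ v k)
      obtain ⟨S, rfl⟩ := hgen σ hσΔ
      have hmx₁ : mQ m (x₀ + vQ v k) = -1 := by
        rw [map_add, hmx₀, mQ_vQ, hk1]; norm_num
      have hkσ : vQ v k ∈ coneOf v S :=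
        neg_mem v m k hk2 S _ hx₁σ (by rw [hmx₁]; norm_num)
      have hx₀σ : x₀ ∈ coneOf v S := by
        obtain ⟨p, hp, hmp, a, ha, hEq⟩ := dec v m k hk2 S _ hx₁σ
        have ham : a = 1 + mQ m p := by
          have h := congrArg (mQ m) hEq
          rw [hmx₁, map_add, map_smul, mQ_vQ, hk1, smul_eq_mul] at h
          push_cast at h; linarith
        have hx₀eq : x₀ = p + (mQ m p) • vQ v k := by
          have h : x₀ + vQ v k = p + (mQ m p) • vQ v k + vQ v k := by
            rw [hEq, ham, add_smul, one_smul]; abel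
          exact add_right_cancel h
        rw [hx₀eq]
        exact Submodule.add_mem _ hp (Submodule.smul_mem _ ⟨mQ m p, hmp⟩ hkσ)
      have hσ1le : coneOf v S₁ ≤ coneOf v S := by
        obtain ⟨hle, l₀, hl₀, hface₀⟩ := hinter _ h1 _ hσΔ
        have hx₀mem : x₀ ∈ coneOf v S₁ ⊓ coneOf v S :=
          Submodule.mem_inf.2 ⟨hx₀1, hx₀σ⟩
        have hl₀x₀ : l₀ x₀ = 0 := (hface₀ x₀ hx₀1).1 hx₀mem
        have hz := hrelint l₀ hl₀ hl₀x₀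
        intro y hy
        exact (Submodule.mem_inf.1 ((hface₀ y hy).2 (hz y hy))).2
      obtain ⟨_, l, hl, hface⟩ := hinter _ hσΔ _ h1
      have hface' : ∀ x ∈ coneOf v S, (x ∈ coneOf v S₁ ↔ l x = 0) := by
        intro x hx
        constructor
        · intro h; exact (hface x hx).1 (Submodule.mem_inf.2 ⟨hx, h⟩)
        · intro h; exact (Submodule.mem_inf.1 ((hface x hx).2 h)).2
      have hlk : 0 < l (vQ v k) := by
        rcases lt_or_eq_of_le (hl _ hkσ) with h | h
        · exact h
        · exfalso
          have hmem : vQ v k ∈ coneOf v S₁ := (hface' _ hkσ).2 h.symm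
          have hz := ((hperp _).1 hmem).2
          rw [mQ_vQ, hk1] at hz; norm_num at hz
      set l' : (Fin d → ℚ) →ₗ[ℚ] ℚ := l + (l (vQ v k)) • mQ m with hl'def
      have hl'apply : ∀ x, l' x = l x + l (vQ v k) * mQ m x := by
        intro x; simp [hl'def]
      have hl'gen : ∀ j ∈ S, 0 ≤ l' (vQ v j) := by
        intro j hj
        rw [hl'apply, mQ_vQ]
        by_cases hjk : j = k
        · subst hjk; rw [hk1]; push_cast; linarith
        · have ha := hl _ (mem_coneOf v hj)
          have hb : (0:ℚ) ≤ (pairing m (v j) : ℚ) := by exact_mod_cast hk2 j hjk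
          nlinarith
      have hl'nonneg : ∀ x ∈ coneOf v S, 0 ≤ l' x := cone_nonneg v S l' hl'gen
      have hl'k : l' (vQ v k) = 0 := by
        rw [hl'apply, mQ_vQ, hk1]; push_cast; ring
      have hσ2le : coneOf v S₂ ≤ coneOf v S := by
        intro x hx
        obtain ⟨s, hs, a, ha, rfl⟩ := claimA x hx
        refine Submodule.add_mem _ (hσ1le hs) ?_
        exact Submodule.smul_mem _ (⟨a, ha⟩ : {c : ℚ // 0 ≤ c}) hkσ
      have hl'zero : ∀ x ∈ coneOf v S₂, l' x = 0 := by
        intro x hx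
        obtain ⟨s, hs, a, ha, rfl⟩ := claimA x hx
        have hms : mQ m s = 0 := ((hperp s).1 hs).2
        have hls : l s = 0 := (hface' s (hσ1le hs)).1 hs
        rw [map_add, map_smul, hl'k, smul_zero, add_zero, hl'apply, hms, hls,
          mul_zero, add_zero]
      have hconv : ∀ x ∈ coneOf v S, l' x = 0 → x ∈ coneOf v S₂ := by
        refine split v S l' (coneOf v S₂) ?_ hl'gen
        intro j hj h0
        by_cases hjk : j = k
        · subst hjk; exact hk2'
        · rw [hl'apply, mQ_vQ] at h0
          have ha := hl _ (mem_coneOf v hj)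
          have hb : (0:ℚ) ≤ (pairing m (v j) : ℚ) := by exact_mod_cast hk2 j hjk
          have hlj : l (vQ v j) = 0 := by nlinarith
          exact hfacet.1 ((hface' _ (mem_coneOf v hj)).2 hlj)
      exact hfaces _ hσΔ _
        ⟨hσ2le, l', hl'nonneg, fun x hx => ⟨fun h => hl'zero x h, hconv x hx⟩⟩
  · intro h2
    exact hfaces _ h2 _ hfacet
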